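/- Let A ∈ ℝ^{n×n} be SPD, M ∈ ℝ^{n×n} nonsingular with M + Mᵀ − A SPD, P ∈ ℝ^{n×n_c} of full column rank, A_c := PᵀAP, and B_c ∈ ℝ^{n_c×n_c} SPD such that B_c − A_c is symmetric positive semidefinite. Then the inexact two-grid iteration matrix E_ITG = (I−M^{-T}A)(I−P B_c^{-1}PᵀA)(I−M^{-1}A) satisfies ‖E_ITG‖_A ≥ 1 − 1/K_TG, where K_TG := max_{v≠0} ‖(I−Π_M̃)v‖²_M̃/‖v‖²_A with M̃ := Mᵀ(M+Mᵀ−A)^{-1}M and Π_M̃ := P(PᵀM̃P)^{-1}PᵀM̃; that is, the inexact two-grid method converges no faster than the exact two-grid method. -/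

import Mathlib

/-!
Let `v` attain `K_TG`, and put `w = (I - Π_M̃) v`, `z = (M + Mᵀ - A)⁻¹ M w`, `u = A⁻¹ Mᵀ z`, so that
`A u = M̃ w` is orthogonal to the range of `P`. Cauchy–Schwarz applied to `⟨u, v⟩_A = ‖w‖²_M̃` gives
`K_TG ‖w‖²_M̃ ≤ ‖u‖²_A`, and the smoothing identity
`‖u - z‖²_A = ‖u‖²_A - ⟨(M + Mᵀ - A) z, z⟩ = ‖u‖²_A - ‖w‖²_M̃` turns this into
`‖x‖²_A ≥ (1 - 1/K_TG) ‖u‖²_A` for the test vector `x = u - z = (I - M⁻ᵀA) u`.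

With `y = (I - M⁻¹A) x` and `c = B_c⁻¹ Pᵀ A y` we have `⟨E x, x⟩_A = ⟨y - P c, y⟩_A ≥ ‖y - P c‖²_A`,
because `B_c ⪰ A_c`; and `⟨u, y - P c⟩_A = ⟨u, y⟩_A = ‖x‖²_A` because `Pᵀ A u = 0`. Cauchy–Schwarz
once more gives `‖x‖⁴_A ≤ ‖u‖²_A ⟨E x, x⟩_A`, hence `⟨E x, x⟩_A ≥ (1 - 1/K_TG) ‖x‖²_A`, which bounds
`‖E‖_A` from below. That `K_TG > 0` follows from `range Π_M̃ ⊆ range P` being a proper subspace.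
-/

open Matrix

/-- Energy norm induced by a matrix `G`: `‖v‖_G = ⟨G v, v⟩^{1/2}`. -/
noncomputable def enorm {m : Type*} [Fintype m] (G : Matrix m m ℝ) (v : m → ℝ) : ℝ :=
  Real.sqrt (v ⬝ᵥ (G *ᵥ v))

namespace Matrix

variable {m k : Type*}

lemma PosSemidef.isSymm {A : Matrix m m ℝ} (hA : A.PosSemidef) : A.IsSymm :=
  isHermitian_iff_isSymm.1 hA.isHermitian

variable [Fintype k]

lemma mulVec_injective_of_rank_eq {P : Matrix m k ℝ} (hP : P.rank = Fintype.card k) :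
    Function.Injective P.mulVec := by
  rw [mulVec_injective_iff, linearIndependent_iff_card_eq_finrank_span, ← hP,
    rank_eq_finrank_span_cols]
  rfl

variable [Fintype m]

lemma IsSymm.dotProduct_mulVec_comm {A : Matrix m m ℝ} (hA : A.IsSymm) (x y : m → ℝ) :
    x ⬝ᵥ A *ᵥ y = y ⬝ᵥ A *ᵥ x := by
  rw [← dotProduct_transpose_mulVec A x y, hA.eq]

lemma dotProduct_transpose_mul_mul_mulVec {l : Type*} [Fintype l] (B : Matrix k m ℝ)
    (W : Matrix k k ℝ) (C : Matrix k l ℝ) (x : m → ℝ) (y : l → ℝ) :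
    x ⬝ᵥ (Bᵀ * W * C) *ᵥ y = (B *ᵥ x) ⬝ᵥ W *ᵥ (C *ᵥ y) := by
  rw [Matrix.mul_assoc, ← mulVec_mulVec, dotProduct_mulVec, vecMul_transpose, ← mulVec_mulVec]

lemma PosDef.transpose_mul_mul_same {A : Matrix m m ℝ} (hA : A.PosDef) {B : Matrix m k ℝ}
    (hB : Function.Injective B.mulVec) : (Bᵀ * A * B).PosDef := by
  simpa only [conjTranspose_eq_transpose_of_trivial] using hA.conjTranspose_mul_mul_same hB

lemma PosSemidef.dotProduct_mulVec_self_nonneg {A : Matrix m m ℝ} (hA : A.PosSemidef)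
    (x : m → ℝ) : 0 ≤ x ⬝ᵥ A *ᵥ x := by
  simpa using hA.dotProduct_mulVec_nonneg x

lemma PosSemidef.sq_dotProduct_mulVec_le [DecidableEq m] {A : Matrix m m ℝ} (hA : A.PosSemidef)
    (x y : m → ℝ) : (x ⬝ᵥ A *ᵥ y) ^ 2 ≤ (x ⬝ᵥ A *ᵥ x) * (y ⬝ᵥ A *ᵥ y) := by
  have h := (toBilin' A).apply_mul_apply_le_of_forall_zero_le
    (fun x ↦ by simpa only [toBilin'_apply'] using hA.dotProduct_mulVec_self_nonneg x) x y
  simp only [toBilin'_apply'] at h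
  rwa [hA.isSymm.dotProduct_mulVec_comm y x, ← sq] at h

lemma PosSemidef.enorm_sq {A : Matrix m m ℝ} (hA : A.PosSemidef) (x : m → ℝ) :
    enorm A x ^ 2 = x ⬝ᵥ A *ᵥ x :=
  Real.sq_sqrt (hA.dotProduct_mulVec_self_nonneg x)

lemma PosSemidef.dotProduct_mulVec_le_enorm_mul_enorm [DecidableEq m] {A : Matrix m m ℝ}
    (hA : A.PosSemidef) (x y : m → ℝ) : x ⬝ᵥ A *ᵥ y ≤ enorm A x * enorm A y := by
  rw [_root_.enorm, _root_.enorm, ← Real.sqrt_mul (hA.dotProduct_mulVec_self_nonneg x)]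
  exact (le_abs_self _).trans (Real.abs_le_sqrt (hA.sq_dotProduct_mulVec_le x y))

lemma PosSemidef.le_enorm_mulVec_div_enorm [DecidableEq m] {A E : Matrix m m ℝ}
    (hA : A.PosSemidef) {x : m → ℝ} (hx : 0 < x ⬝ᵥ A *ᵥ x) {θ : ℝ}
    (hθ : θ * (x ⬝ᵥ A *ᵥ x) ≤ x ⬝ᵥ A *ᵥ (E *ᵥ x)) :
    θ ≤ enorm A (E *ᵥ x) / enorm A x := by
  have hpos : 0 < enorm A x := Real.sqrt_pos.2 hx
  rw [le_div_iff₀ hpos, ← mul_le_mul_iff_left₀ hpos, mul_assoc, ← sq, hA.enorm_sq]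
  exact hθ.trans ((hA.dotProduct_mulVec_le_enorm_mul_enorm _ _).trans_eq (mul_comm _ _))

lemma exists_one_sub_mul_mulVec_ne_zero [DecidableEq m] (hk : Fintype.card k < Fintype.card m)
    (P : Matrix m k ℝ) (X : Matrix k m ℝ) : ∃ v : m → ℝ, (1 - P * X) *ᵥ v ≠ 0 := by
  by_contra! h
  have hsurj : Function.Surjective P.mulVecLin := fun v ↦ ⟨X *ᵥ v, by
    simpa [sub_mulVec, mulVec_mulVec, sub_eq_zero, eq_comm] using h v⟩
  have := LinearMap.finrank_le_finrank_of_surjective hsurj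
  simp only [Module.finrank_fintype_fun_eq_card] at this
  omega

lemma transpose_mul_mul_one_sub_proj [DecidableEq m] [DecidableEq k] {G : Matrix m m ℝ}
    {P : Matrix m k ℝ} (h : IsUnit (Pᵀ * G * P).det) :
    Pᵀ * G * (1 - P * (Pᵀ * G * P)⁻¹ * Pᵀ * G) = 0 := by
  rw [Matrix.mul_sub, Matrix.mul_one, show Pᵀ * G * (P * (Pᵀ * G * P)⁻¹ * Pᵀ * G)
    = Pᵀ * G * P * (Pᵀ * G * P)⁻¹ * (Pᵀ * G) by simp only [Matrix.mul_assoc],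
    mul_nonsing_inv _ h, Matrix.one_mul, sub_self]

lemma sq_dotProduct_mulVec_le_of_sub_mem_range [DecidableEq m] {A G : Matrix m m ℝ}
    (hA : A.PosSemidef) {P : Matrix m k ℝ} {v w u : m → ℝ} {x : k → ℝ}
    (hvw : v - w = P *ᵥ x) (hPG : Pᵀ *ᵥ (G *ᵥ w) = 0) (hu : A *ᵥ u = G *ᵥ w) :
    (w ⬝ᵥ G *ᵥ w) ^ 2 ≤ (u ⬝ᵥ A *ᵥ u) * (v ⬝ᵥ A *ᵥ v) := by
  have huv : u ⬝ᵥ A *ᵥ v = w ⬝ᵥ G *ᵥ w := by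
    have hGP : (G *ᵥ w) ⬝ᵥ (P *ᵥ x) = 0 := by
      rw [dotProduct_mulVec, ← mulVec_transpose, hPG, zero_dotProduct]
    rw [hA.isSymm.dotProduct_mulVec_comm, dotProduct_comm, hu,
      ← sub_add_cancel v w, hvw, dotProduct_add, hGP, zero_add, dotProduct_comm]
  rw [← huv]
  exact hA.sq_dotProduct_mulVec_le u v

lemma dotProduct_mulVec_inv_mulVec [DecidableEq m] {N : Matrix m m ℝ} (hN : IsUnit N.det)
    (M : Matrix m m ℝ) (w : m → ℝ) :
    (N⁻¹ *ᵥ (M *ᵥ w)) ⬝ᵥ N *ᵥ (N⁻¹ *ᵥ (M *ᵥ w)) = w ⬝ᵥ (Mᵀ * N⁻¹ * M) *ᵥ w := by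
  rw [show N *ᵥ (N⁻¹ *ᵥ (M *ᵥ w)) = M *ᵥ w by rw [mulVec_mulVec, mul_nonsing_inv _ hN, one_mulVec],
    dotProduct_comm, dotProduct_transpose_mul_mul_mulVec]

lemma dotProduct_mulVec_sub_sub_of_transpose_mulVec {A M : Matrix m m ℝ} (hA : A.IsSymm)
    {u z : m → ℝ} (hz : Mᵀ *ᵥ z = A *ᵥ u) :
    (u - z) ⬝ᵥ A *ᵥ (u - z) = u ⬝ᵥ A *ᵥ u - z ⬝ᵥ (M + Mᵀ - A) *ᵥ z := by
  have hzu : z ⬝ᵥ A *ᵥ u = z ⬝ᵥ M *ᵥ z := by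
    rw [← hz, mulVec_transpose, dotProduct_comm, ← dotProduct_mulVec]
  have huz : u ⬝ᵥ A *ᵥ z = z ⬝ᵥ A *ᵥ u := hA.dotProduct_mulVec_comm u z
  have hMt : z ⬝ᵥ Mᵀ *ᵥ z = z ⬝ᵥ M *ᵥ z := by
    rw [mulVec_transpose, dotProduct_comm, ← dotProduct_mulVec]
  simp only [mulVec_sub, sub_dotProduct, dotProduct_sub, add_mulVec, sub_mulVec, dotProduct_add,
    huz, hzu, hMt]
  ring

lemma dotProduct_mulVec_one_sub_mul_mulVec [DecidableEq m] {A : Matrix m m ℝ} (hA : A.IsSymm)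
    (S : Matrix m m ℝ) (x y : m → ℝ) :
    x ⬝ᵥ A *ᵥ ((1 - S * A) *ᵥ y) = ((1 - Sᵀ * A) *ᵥ x) ⬝ᵥ A *ᵥ y := by
  have h : A * (1 - S * A) = (1 - Sᵀ * A)ᵀ * A * 1 := by
    rw [transpose_sub, transpose_one, transpose_mul, transpose_transpose, hA.eq, Matrix.mul_one,
      Matrix.mul_sub, Matrix.sub_mul, Matrix.mul_one, Matrix.one_mul, Matrix.mul_assoc]
  rw [mulVec_mulVec, h, dotProduct_transpose_mul_mul_mulVec, one_mulVec]

lemma dotProduct_mulVec_sub_mulVec_le {A : Matrix m m ℝ} (hA : A.IsSymm) {P : Matrix m k ℝ}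
    {B : Matrix k k ℝ} (hB : (B - Pᵀ * A * P).PosSemidef) {y : m → ℝ} {c : k → ℝ}
    (hc : B *ᵥ c = Pᵀ *ᵥ (A *ᵥ y)) :
    (y - P *ᵥ c) ⬝ᵥ A *ᵥ (y - P *ᵥ c) ≤ y ⬝ᵥ A *ᵥ (y - P *ᵥ c) := by
  have hcy : y ⬝ᵥ A *ᵥ (P *ᵥ c) = c ⬝ᵥ B *ᵥ c := by
    rw [hc, dotProduct_transpose_mulVec, dotProduct_mulVec y, ← mulVec_transpose, hA.eq]
  have hcc : (P *ᵥ c) ⬝ᵥ A *ᵥ (P *ᵥ c) = c ⬝ᵥ (Pᵀ * A * P) *ᵥ c :=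
    (dotProduct_transpose_mul_mul_mulVec P A P c c).symm
  have hnn := hB.dotProduct_mulVec_self_nonneg c
  rw [sub_mulVec, dotProduct_sub] at hnn
  rw [sub_dotProduct, mulVec_sub, dotProduct_sub, dotProduct_sub, hcc,
    hA.dotProduct_mulVec_comm (P *ᵥ c), hcy]
  linarith

lemma sq_dotProduct_mulVec_le_mul_inexactTwoGrid [DecidableEq m] [DecidableEq k]
    {A M : Matrix m m ℝ} {P : Matrix m k ℝ} {B : Matrix k k ℝ} (hA : A.PosSemidef)
    (hM : IsUnit M.det) (hB : IsUnit B.det) (hBA : (B - Pᵀ * A * P).PosSemidef) {u z : m → ℝ}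
    (hz : Mᵀ *ᵥ z = A *ᵥ u) (hPu : Pᵀ *ᵥ (A *ᵥ u) = 0) :
    ((u - z) ⬝ᵥ A *ᵥ (u - z)) ^ 2 ≤ (u ⬝ᵥ A *ᵥ u) * ((u - z) ⬝ᵥ A *ᵥ
      (((1 - Mᵀ⁻¹ * A) * (1 - P * B⁻¹ * Pᵀ * A) * (1 - M⁻¹ * A)) *ᵥ (u - z))) := by
  have hAs := hA.isSymm
  set x := u - z
  set y := (1 - M⁻¹ * A) *ᵥ x
  set c := B⁻¹ *ᵥ (Pᵀ *ᵥ (A *ᵥ y))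
  have hc : B *ᵥ c = Pᵀ *ᵥ (A *ᵥ y) := by
    rw [mulVec_mulVec, mul_nonsing_inv _ hB, one_mulVec]
  have hsmooth : (1 - Mᵀ⁻¹ * A) *ᵥ u = x := by
    rw [sub_mulVec, one_mulVec, ← mulVec_mulVec, ← hz, mulVec_mulVec,
      nonsing_inv_mul _ (isUnit_det_transpose M hM), one_mulVec]
  have hEx : ((1 - Mᵀ⁻¹ * A) * (1 - P * B⁻¹ * Pᵀ * A) * (1 - M⁻¹ * A)) *ᵥ x
      = (1 - Mᵀ⁻¹ * A) *ᵥ (y - P *ᵥ c) := by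
    simp only [← mulVec_mulVec, sub_mulVec, one_mulVec, y, c]
  have huPc : u ⬝ᵥ A *ᵥ (P *ᵥ c) = 0 := by
    rw [hAs.dotProduct_mulVec_comm, dotProduct_comm,
      ← dotProduct_transpose_mulVec, hPu, dotProduct_zero]
  have hu : u ⬝ᵥ A *ᵥ (y - P *ᵥ c) = x ⬝ᵥ A *ᵥ x := by
    rw [mulVec_sub, dotProduct_sub, huPc, sub_zero, dotProduct_mulVec_one_sub_mul_mulVec hAs,
      transpose_nonsing_inv, hsmooth]
  calc (x ⬝ᵥ A *ᵥ x) ^ 2 = (u ⬝ᵥ A *ᵥ (y - P *ᵥ c)) ^ 2 := by rw [hu]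
    _ ≤ (u ⬝ᵥ A *ᵥ u) * ((y - P *ᵥ c) ⬝ᵥ A *ᵥ (y - P *ᵥ c)) :=
      hA.sq_dotProduct_mulVec_le _ _
    _ ≤ (u ⬝ᵥ A *ᵥ u) * (y ⬝ᵥ A *ᵥ (y - P *ᵥ c)) :=
      mul_le_mul_of_nonneg_left (dotProduct_mulVec_sub_mulVec_le hAs hBA hc)
        (hA.dotProduct_mulVec_self_nonneg u)
    _ = (u ⬝ᵥ A *ᵥ u) * (x ⬝ᵥ A *ᵥ
          (((1 - Mᵀ⁻¹ * A) * (1 - P * B⁻¹ * Pᵀ * A) * (1 - M⁻¹ * A)) *ᵥ x)) := by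
      rw [hEx, dotProduct_mulVec_one_sub_mul_mulVec hAs, transpose_nonsing_inv,
        transpose_transpose]

lemma mul_dotProduct_mulVec_le_inexactTwoGrid [DecidableEq m] [DecidableEq k]
    {A M : Matrix m m ℝ} {P : Matrix m k ℝ} {B : Matrix k k ℝ} (hA : A.PosSemidef)
    (hM : IsUnit M.det) (hB : IsUnit B.det) (hBA : (B - Pᵀ * A * P).PosSemidef) {u z : m → ℝ}
    (hz : Mᵀ *ᵥ z = A *ᵥ u) (hPu : Pᵀ *ᵥ (A *ᵥ u) = 0) {θ : ℝ}
    (hθ : θ * (u ⬝ᵥ A *ᵥ u) ≤ (u - z) ⬝ᵥ A *ᵥ (u - z)) (hs : 0 < (u - z) ⬝ᵥ A *ᵥ (u - z)) :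
    θ * ((u - z) ⬝ᵥ A *ᵥ (u - z)) ≤ (u - z) ⬝ᵥ A *ᵥ
      (((1 - Mᵀ⁻¹ * A) * (1 - P * B⁻¹ * Pᵀ * A) * (1 - M⁻¹ * A)) *ᵥ (u - z)) := by
  have hCS := sq_dotProduct_mulVec_le_mul_inexactTwoGrid hA hM hB hBA hz hPu
  have hu : 0 < u ⬝ᵥ A *ᵥ u := by
    refine (hA.dotProduct_mulVec_self_nonneg u).lt_of_ne fun h ↦ ?_
    rw [← h, zero_mul] at hCS
    nlinarith
  refine le_of_mul_le_mul_left ?_ hu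
  nlinarith [mul_le_mul_of_nonneg_right hθ hs.le]

lemma pos_of_isGreatest_energy_ratio [DecidableEq m] {A G Q : Matrix m m ℝ} (hA : A.PosDef)
    (hG : G.PosDef) {P : Matrix m k ℝ} {X : Matrix k m ℝ} (hQ : Q = P * X)
    (hk : Fintype.card k < Fintype.card m) {K : ℝ}
    (hK : IsGreatest {r : ℝ | ∃ v : m → ℝ, v ≠ 0 ∧
      r = enorm G ((1 - Q) *ᵥ v) ^ 2 / enorm A v ^ 2} K) : 0 < K := by
  subst hQ
  obtain ⟨v, hv⟩ := exists_one_sub_mul_mulVec_ne_zero hk P X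
  have hv0 : v ≠ 0 := by
    rintro rfl
    simp at hv
  refine lt_of_lt_of_le ?_ (hK.2 ⟨v, hv0, rfl⟩)
  rw [hG.posSemidef.enorm_sq, hA.posSemidef.enorm_sq]
  exact div_pos (by simpa using hG.dotProduct_mulVec_pos hv)
    (by simpa using hA.dotProduct_mulVec_pos hv0)

lemma exists_smoothing_pair_of_isGreatest [DecidableEq m] {A M G Q : Matrix m m ℝ}
    (hA : A.PosDef) (hN : IsUnit (M + Mᵀ - A).det) (hGM : G = Mᵀ * (M + Mᵀ - A)⁻¹ * M)
    (hG : G.PosSemidef) {P : Matrix m k ℝ} {X : Matrix k m ℝ} (hQ : Q = P * X)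
    (hPQ : Pᵀ * G * (1 - Q) = 0) {K : ℝ} (hK1 : 1 < K)
    (hK : IsGreatest {r : ℝ | ∃ v : m → ℝ, v ≠ 0 ∧
      r = enorm G ((1 - Q) *ᵥ v) ^ 2 / enorm A v ^ 2} K) :
    ∃ u z : m → ℝ, Mᵀ *ᵥ z = A *ᵥ u ∧ Pᵀ *ᵥ (A *ᵥ u) = 0 ∧
      0 < (u - z) ⬝ᵥ A *ᵥ (u - z) ∧
      (1 - 1 / K) * (u ⬝ᵥ A *ᵥ u) ≤ (u - z) ⬝ᵥ A *ᵥ (u - z) := by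
  obtain ⟨v, hv, hKv⟩ := hK.1
  set w := (1 - Q) *ᵥ v
  set z := (M + Mᵀ - A)⁻¹ *ᵥ (M *ᵥ w)
  obtain ⟨u, hAu⟩ : ∃ u, A *ᵥ u = Mᵀ *ᵥ z :=
    ⟨A⁻¹ *ᵥ (Mᵀ *ᵥ z), by rw [mulVec_mulVec, mul_nonsing_inv _ hA.det_pos.ne'.isUnit, one_mulVec]⟩
  have hGw : G *ᵥ w = A *ᵥ u := by
    rw [hAu, hGM]
    simp only [z, mulVec_mulVec, Matrix.mul_assoc]
  have hPGw : Pᵀ *ᵥ (G *ᵥ w) = 0 := by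
    rw [show Pᵀ *ᵥ (G *ᵥ w) = (Pᵀ * G * (1 - Q)) *ᵥ v by
      simp only [w, mulVec_mulVec, Matrix.mul_assoc], hPQ, zero_mulVec]
  have hq : 0 < v ⬝ᵥ A *ᵥ v := by simpa using hA.dotProduct_mulVec_pos hv
  have hKw : w ⬝ᵥ G *ᵥ w = K * (v ⬝ᵥ A *ᵥ v) := by
    rw [hKv, hG.enorm_sq, hA.posSemidef.enorm_sq, div_mul_cancel₀ _ hq.ne']
  have hCS := sq_dotProduct_mulVec_le_of_sub_mem_range hA.posSemidef (v := v) (x := X *ᵥ v)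
    (by simp [w, hQ, sub_mulVec, mulVec_mulVec]) hPGw hGw.symm
  rw [hKw] at hCS
  have hKa : K * (K * (v ⬝ᵥ A *ᵥ v)) ≤ u ⬝ᵥ A *ᵥ u := by nlinarith
  have hs : (u - z) ⬝ᵥ A *ᵥ (u - z) = u ⬝ᵥ A *ᵥ u - K * (v ⬝ᵥ A *ᵥ v) := by
    rw [dotProduct_mulVec_sub_sub_of_transpose_mulVec hA.posSemidef.isSymm hAu.symm,
      dotProduct_mulVec_inv_mulVec hN M w, ← hGM, hKw]
  have hKq : 0 < K * (v ⬝ᵥ A *ᵥ v) := mul_pos (by linarith) hq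
  refine ⟨u, z, hAu.symm, hGw ▸ hPGw, by nlinarith [mul_pos (sub_pos.2 hK1) hKq], ?_⟩
  have : K * (v ⬝ᵥ A *ᵥ v) ≤ (u ⬝ᵥ A *ᵥ u) / K := by
    rw [le_div_iff₀ (by linarith)]
    linarith
  rw [hs, sub_mul, one_mul, one_div_mul_eq_div]
  linarith

end Matrix

theorem stmt_19 {n nc : ℕ} (hnc : nc < n)
    (A M : Matrix (Fin n) (Fin n) ℝ)
    (P : Matrix (Fin n) (Fin nc) ℝ)
    (Bc : Matrix (Fin nc) (Fin nc) ℝ)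
    (hA : A.PosDef) (hM : IsUnit M.det)
    (hMMA : (M + Mᵀ - A).PosDef)
    (hP : P.rank = nc)
    (hBc : Bc.PosDef)
    (Ac : Matrix (Fin nc) (Fin nc) ℝ) (hAc : Ac = Pᵀ * A * P)
    (hBcAc : (Bc - Ac).PosSemidef)
    (E : Matrix (Fin n) (Fin n) ℝ)
    (hE : E = (1 - Mᵀ⁻¹ * A) * (1 - P * Bc⁻¹ * Pᵀ * A) * (1 - M⁻¹ * A))
    (Mtil : Matrix (Fin n) (Fin n) ℝ)
    (hMtil : Mtil = Mᵀ * (M + Mᵀ - A)⁻¹ * M)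
    (Pi : Matrix (Fin n) (Fin n) ℝ) (hPi : Pi = P * (Pᵀ * Mtil * P)⁻¹ * Pᵀ * Mtil)
    (KTG : ℝ)
    (hK : IsGreatest {r : ℝ | ∃ v : Fin n → ℝ, v ≠ 0 ∧
        r = (enorm Mtil ((1 - Pi) *ᵥ v)) ^ 2 / (enorm A v) ^ 2} KTG)
    (normE : ℝ)
    (hnormE : IsGreatest {r : ℝ | ∃ v : Fin n → ℝ, v ≠ 0 ∧
        r = enorm A (E *ᵥ v) / enorm A v} normE) :
    normE ≥ 1 - 1 / KTG := by
  rcases le_or_gt (1 - 1 / KTG) 0 with hθ | hθ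
  · obtain ⟨v, -, rfl⟩ := hnormE.1
    exact hθ.trans (div_nonneg (Real.sqrt_nonneg _) (Real.sqrt_nonneg _))
  have hMtilPD : Mtil.PosDef := hMtil ▸ hMMA.inv.transpose_mul_mul_same
    (mulVec_injective_of_isUnit ((isUnit_iff_isUnit_det M).2 hM))
  have hPMtilP := hMtilPD.transpose_mul_mul_same
    (mulVec_injective_of_rank_eq (hP.trans (Fintype.card_fin nc).symm))
  have hPiX : Pi = P * ((Pᵀ * Mtil * P)⁻¹ * Pᵀ * Mtil) := by
    rw [hPi]
    simp only [Matrix.mul_assoc]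
  have hK0 := pos_of_isGreatest_energy_ratio hA hMtilPD hPiX (by simpa using hnc) hK
  have hK1 : 1 < KTG := by rwa [sub_pos, div_lt_one hK0] at hθ
  obtain ⟨u, z, hz, hPu, hs, hθs⟩ := exists_smoothing_pair_of_isGreatest hA
    hMMA.det_pos.ne'.isUnit hMtil hMtilPD.posSemidef hPiX
    (hPi ▸ transpose_mul_mul_one_sub_proj hPMtilP.det_pos.ne'.isUnit) hK1 hK
  subst hE hAc
  refine (hA.posSemidef.le_enorm_mulVec_div_enorm hs ?_).trans
    (hnormE.2 ⟨u - z, fun h ↦ by simp [h] at hs, rfl⟩)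
  exact mul_dotProduct_mulVec_le_inexactTwoGrid hA.posSemidef hM hBc.det_pos.ne'.isUnit hBcAc
    hz hPu hθs hs
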